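/- arXiv:2006.13050 — 4 statements merged into one kernel-verified Lean document; each statement's English description precedes it below -/
import Mathlib

section
/- For every pair of natural numbers a, b there exists a polynomial q in two variables over ℚ such that F_{a,b} = q(e, p) in K, where q(e,p) denotes the image of q under the evaluation of its two variables at e = x₁x₂ and p = x₁² + x₂². -/
open MvPolynomial

noncomputable section

/-- The polynomial ring `ℚ[x₁,x₂]`. -/
abbrev R : Type := MvPolynomial (Fin 2) ℚ

/-- The field of rational functions `K = ℚ(x₁,x₂)`. -/
abbrev K : Type := FractionRing R

/-- The image of `x₁` in `K`. -/
def x₁ : K := algebraMap R K (X 0)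

/-- The image of `x₂` in `K`. -/
def x₂ : K := algebraMap R K (X 1)

/-- The localisation expression
`F_{a,b} = (x₁x₂)^a(x₁²+x₂²)^b/(x₁x₂) + (x₁²−x₁x₂)^a(x₁²+(x₂−x₁)²)^b/(x₁²−x₁x₂)
  + (x₂²−x₁x₂)^a(x₂²+(x₁−x₂)²)^b/(x₂²−x₁x₂)` in `K`. -/
def F (a b : ℕ) : K :=
  (x₁ * x₂) ^ a * (x₁ ^ 2 + x₂ ^ 2) ^ b / (x₁ * x₂)
    + (x₁ ^ 2 - x₁ * x₂) ^ a * (x₁ ^ 2 + (x₂ - x₁) ^ 2) ^ b / (x₁ ^ 2 - x₁ * x₂)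
    + (x₂ ^ 2 - x₁ * x₂) ^ a * (x₂ ^ 2 + (x₁ - x₂) ^ 2) ^ b / (x₂ ^ 2 - x₁ * x₂)

/-- The subalgebra of `K` generated (as image of `aeval`) by `e = x₁x₂` and `p = x₁²+x₂²`. -/
def epSubalg : Subalgebra ℚ K :=
  (aeval (R := ℚ) ![x₁ * x₂, x₁ ^ 2 + x₂ ^ 2] :
    MvPolynomial (Fin 2) ℚ →ₐ[ℚ] K).range

lemma e_mem : x₁ * x₂ ∈ epSubalg := ⟨X 0, by simp⟩

lemma p_mem : x₁ ^ 2 + x₂ ^ 2 ∈ epSubalg := ⟨X 1, by simp⟩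

lemma map_ne (f : R) (hf : f ≠ 0) : algebraMap R K f ≠ 0 := by
  simpa using (IsFractionRing.to_map_eq_zero_iff (K := K)).not.mpr hf

lemma hx1 : x₁ ≠ 0 := map_ne _ (X_ne_zero 0)

lemma hx2 : x₂ ≠ 0 := map_ne _ (X_ne_zero 1)

lemma hx12 : x₁ - x₂ ≠ 0 := by
  have : (X 0 - X 1 : R) ≠ 0 := by
    intro h
    have := congrArg (eval ![(1 : ℚ), 0]) h
    simp at this
  simpa [x₁, x₂, map_sub] using map_ne _ this

lemma ht1 : x₁ * x₂ ≠ 0 := mul_ne_zero hx1 hx2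

lemma ht2 : x₁ ^ 2 - x₁ * x₂ ≠ 0 := by
  have : x₁ ^ 2 - x₁ * x₂ = x₁ * (x₁ - x₂) := by ring
  rw [this]; exact mul_ne_zero hx1 hx12

lemma ht3 : x₂ ^ 2 - x₁ * x₂ ≠ 0 := by
  have : x₂ ^ 2 - x₁ * x₂ = -(x₂ * (x₁ - x₂)) := by ring
  rw [this]; exact neg_ne_zero.mpr (mul_ne_zero hx2 hx12)

/-- Newton-type recursion for a cubic relation. -/
lemma cube_aux (t A B : K) (h : t ^ 3 = A * t ^ 2 + B) (m : ℕ) :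
    t ^ (m + 3) = A * t ^ (m + 2) + B * t ^ m := by
  rw [pow_add, pow_add, h]; ring

/-- Power sums of three elements satisfying a common cubic with `s₂ = 0` lie in a subalgebra
containing the coefficients. -/
lemma Pmem_gen (A B : K) (hA : A ∈ epSubalg) (hB : B ∈ epSubalg) (u1 u2 u3 : K)
    (h1 : u1 ^ 3 = A * u1 ^ 2 + B) (h2 : u2 ^ 3 = A * u2 ^ 2 + B)
    (h3 : u3 ^ 3 = A * u3 ^ 2 + B)
    (e0 : u1 + u2 + u3 = A) (e1 : u1 ^ 2 + u2 ^ 2 + u3 ^ 2 = A ^ 2) :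
    ∀ m : ℕ, u1 ^ m + u2 ^ m + u3 ^ m ∈ epSubalg
  | 0 => by
      simp only [pow_zero]
      exact add_mem (add_mem (one_mem _) (one_mem _)) (one_mem _)
  | 1 => by simp only [pow_one]; rw [e0]; exact hA
  | 2 => by rw [e1]; exact pow_mem hA 2
  | (m + 3) => by
      rw [cube_aux u1 A B h1 m, cube_aux u2 A B h2 m, cube_aux u3 A B h3 m]
      have key : A * u1 ^ (m + 2) + B * u1 ^ m + (A * u2 ^ (m + 2) + B * u2 ^ m)
          + (A * u3 ^ (m + 2) + B * u3 ^ m)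
          = A * (u1 ^ (m + 2) + u2 ^ (m + 2) + u3 ^ (m + 2))
            + B * (u1 ^ m + u2 ^ m + u3 ^ m) := by ring
      rw [key]
      exact add_mem (mul_mem hA (Pmem_gen A B hA hB u1 u2 u3 h1 h2 h3 e0 e1 (m + 2)))
        (mul_mem hB (Pmem_gen A B hA hB u1 u2 u3 h1 h2 h3 e0 e1 m))

lemma term_rec (t u c : K) (ht : t ≠ 0) (huc : u = t + c) (a b : ℕ) :
    t ^ a * u ^ (b + 1) / t
      = t ^ (a + 1) * u ^ b / t + c * (t ^ a * u ^ b / t) := by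
  subst huc
  field_simp
  ring

lemma Frec (a b : ℕ) :
    F a (b + 1) = F (a + 1) b + (x₁ ^ 2 + x₂ ^ 2 - x₁ * x₂) * F a b := by
  simp only [F]
  rw [term_rec (x₁ * x₂) (x₁ ^ 2 + x₂ ^ 2) (x₁ ^ 2 + x₂ ^ 2 - x₁ * x₂) ht1 (by ring) a b,
    term_rec (x₁ ^ 2 - x₁ * x₂) (x₁ ^ 2 + (x₂ - x₁) ^ 2) (x₁ ^ 2 + x₂ ^ 2 - x₁ * x₂) ht2
      (by ring) a b,
    term_rec (x₂ ^ 2 - x₁ * x₂) (x₂ ^ 2 + (x₁ - x₂) ^ 2) (x₁ ^ 2 + x₂ ^ 2 - x₁ * x₂) ht3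
      (by ring) a b]
  ring

lemma F00 : F 0 0 = 0 := by
  have h1 := ht1; have h2 := ht2; have h3 := ht3
  simp only [F, pow_zero, one_mul, mul_one]
  rw [div_add_div _ _ h1 h2, div_add_div _ _ (mul_ne_zero h1 h2) h3, div_eq_zero_iff]; left
  ring

lemma Fsucc0 (a : ℕ) :
    F (a + 1) 0 = (x₁ * x₂) ^ a + (x₁ ^ 2 - x₁ * x₂) ^ a + (x₂ ^ 2 - x₁ * x₂) ^ a := by
  have key : ∀ t : K, t ≠ 0 → t ^ (a + 1) / t = t ^ a := by
    intro t ht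
    rw [pow_succ, mul_div_assoc, div_self ht, mul_one]
  simp only [F, pow_zero, mul_one]
  rw [key _ ht1, key _ ht2, key _ ht3]

lemma F_mem (a b : ℕ) : F a b ∈ epSubalg := by
  induction b generalizing a with
  | zero =>
      cases a with
      | zero => rw [F00]; exact zero_mem _
      | succ n =>
          rw [Fsucc0 n]
          refine Pmem_gen (x₁ ^ 2 + x₂ ^ 2 - x₁ * x₂)
            ((x₁ * x₂) ^ 2 * (2 * (x₁ * x₂) - (x₁ ^ 2 + x₂ ^ 2)))
            (sub_mem p_mem e_mem)
            (mul_mem (pow_mem e_mem 2)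
              (sub_mem (mul_mem (Subalgebra.natCast_mem _ 2) e_mem) p_mem))
            _ _ _ (by ring) (by ring) (by ring) (by ring) (by ring) n
  | succ b ih =>
      rw [Frec]
      exact add_mem (ih (a + 1)) (mul_mem (sub_mem p_mem e_mem) (ih a))

/-- For every `a, b` there is a polynomial `q` in two variables over `ℚ` with
`F_{a,b} = q(e, p)` where `e = x₁x₂` and `p = x₁² + x₂²`. -/
theorem stmt0 (a b : ℕ) :
    ∃ q : MvPolynomial (Fin 2) ℚ,
      F a b = aeval ![x₁ * x₂, x₁ ^ 2 + x₂ ^ 2] q := by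
  obtain ⟨q, hq⟩ := F_mem a b
  exact ⟨q, hq.symm⟩

end
end

section
/- In the field K = ℚ(x₁,x₂) the identity F_{0,2} = 7p − 7e holds, where e = x₁x₂ and p = x₁²+x₂². -/
open MvPolynomial

noncomputable section

/-- The identity `q_{0,2} = 7p₁ − 7e` from the paper, where `e = x₁x₂` and `p = x₁² + x₂²`. -/
theorem stmt6 :
    F 0 2 = 7 * (x₁ ^ 2 + x₂ ^ 2) - 7 * (x₁ * x₂) := by
  have h1 := hx1
  have h2 := hx2
  have h12 := hx12
  have d2 : x₁ ^ 2 - x₁ * x₂ ≠ 0 := by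
    have : x₁ ^ 2 - x₁ * x₂ = x₁ * (x₁ - x₂) := by ring
    rw [this]; exact mul_ne_zero h1 h12
  have d3 : x₂ ^ 2 - x₁ * x₂ ≠ 0 := by
    have : x₂ ^ 2 - x₁ * x₂ = -(x₂ * (x₁ - x₂)) := by ring
    rw [this]; exact neg_ne_zero.2 (mul_ne_zero h2 h12)
  rw [F]
  have h21 : x₂ - x₁ ≠ 0 := sub_ne_zero.2 (Ne.symm (sub_ne_zero.1 h12))
  field_simp
  ring

end
end

section
/- In the field K = ℚ(x₁,x₂) the identity F_{0,3} = 13(p² + e² − 2ep) holds, where e = x₁x₂ and p = x₁²+x₂². -/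
open MvPolynomial

noncomputable section

lemma injK : Function.Injective (algebraMap R K) :=
  IsFractionRing.injective R K

/-- The identity `q_{0,3} = 13(p₁² + e² − 2ep₁)` from the paper, where `e = x₁x₂` and `p = x₁² + x₂²`. -/
theorem stmt9 :
    F 0 3 = 13 * ((x₁ ^ 2 + x₂ ^ 2) ^ 2 + (x₁ * x₂) ^ 2 - 2 * (x₁ * x₂) * (x₁ ^ 2 + x₂ ^ 2)) := by
  have h1 := hx1
  have h2 := hx2
  have h3 := hx12
  have d2 : x₁ ^ 2 - x₁ * x₂ ≠ 0 := by
    have : x₁ ^ 2 - x₁ * x₂ = x₁ * (x₁ - x₂) := by ring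
    rw [this]; exact mul_ne_zero h1 h3
  have d3 : x₂ ^ 2 - x₁ * x₂ ≠ 0 := by
    have : x₂ ^ 2 - x₁ * x₂ = -(x₂ * (x₁ - x₂)) := by ring
    rw [this]; exact neg_ne_zero.mpr (mul_ne_zero h2 h3)
  unfold F
  have h4 : x₂ - x₁ ≠ 0 := by intro h; apply h3; linear_combination -h
  have h5 : -x₁ + x₂ ≠ 0 := by intro h; apply h3; linear_combination -h
  field_simp
  ring

end
end

section
/- In the field K = ℚ(x₁,x₂) the identity F_{3,0} = p² + e² − 2ep holds, where e = x₁x₂ and p = x₁²+x₂². -/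
open MvPolynomial

noncomputable section

/-- The identity `q_{3,0} = p₁² + e² − 2ep₁` from the paper, where `e = x₁x₂` and `p = x₁² + x₂²`. -/
theorem stmt12 :
    F 3 0 = (x₁ ^ 2 + x₂ ^ 2) ^ 2 + (x₁ * x₂) ^ 2 - 2 * (x₁ * x₂) * (x₁ ^ 2 + x₂ ^ 2) := by
  have hinj := IsFractionRing.injective R K
  have h1 : x₁ ≠ 0 := by
    simpa [x₁] using (map_ne_zero_iff _ hinj).2 (MvPolynomial.X_ne_zero (0 : Fin 2))
  have h2 : x₂ ≠ 0 := by
    simpa [x₂] using (map_ne_zero_iff _ hinj).2 (MvPolynomial.X_ne_zero (1 : Fin 2))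
  have h3 : x₁ - x₂ ≠ 0 := by
    rw [x₁, x₂, ← map_sub]
    refine (map_ne_zero_iff _ hinj).2 ?_
    intro h
    have := congrArg (MvPolynomial.coeff (Finsupp.single (0 : Fin 2) 1)) h
    simp [MvPolynomial.coeff_X', Finsupp.single_eq_single_iff] at this
  have e1 : x₁ ^ 2 - x₁ * x₂ ≠ 0 := by
    have : x₁ ^ 2 - x₁ * x₂ = x₁ * (x₁ - x₂) := by ring
    rw [this]; exact mul_ne_zero h1 h3
  have e2 : x₂ ^ 2 - x₁ * x₂ ≠ 0 := by
    have : x₂ ^ 2 - x₁ * x₂ = -(x₂ * (x₁ - x₂)) := by ring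
    rw [this]; exact neg_ne_zero.2 (mul_ne_zero h2 h3)
  rw [F]
  field_simp
  ring

end
end
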